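/- Let p be a positive integer, let g, h : ℝ^p → ℝ be convex, let f : ℝ^p → ℝ be convex and L-smooth with L > 0, and let γ > 0. Let y* ∈ ℝ^p be a fixed point, i.e., there is x* ∈ ℝ^p such that x* is a proximal point of g at y* with parameter γ and x* is a proximal point of h at 2x* − y* − γ∇f(x*) with parameter γ. Let sequences (y_k), (x_k), (z_k) in ℝ^p satisfy, for every k ≥ 0: (x_k, z_k) is a three-operator splitting step from y_k, and y_{k+1} = y_k − x_k + z_k. Then with G_i = (x_i − z_i)/γ, for every integer k ≥ 0 one has γ²(1 − γL/2)·∑_{i=0}^{k} ‖G_i‖² ≤ ‖y_0 − y*‖². -/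

import Mathlib

/-! By the prox optimality conditions, `(y - x)/γ ∈ ∂g(x)` and `(2x - y - γ∇f(x) - z)/γ ∈ ∂h(z)`,
and likewise at the fixed point (where `z* = x*`). Adding the two monotonicity inequalities of
`∂g` and `∂h` gives the Fejér-type estimate
`‖y⁺ - y*‖² ≤ ‖y - y*‖² - ‖x - z‖² - 2γ⟪∇f(x) - ∇f(x*), z - x*⟫`,
and Baillon–Haddad cocoercivity of `∇f` bounds the last inner product below by `-(L/4)‖x - z‖²`.
Each step thus decreases `‖y - y*‖²` by at least `γ²(1 - γL/2)‖G‖²`, and the sum telescopes. -/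

open RealInnerProductSpace

def IsProxPt {p : ℕ} (γ : ℝ) (φ : EuclideanSpace ℝ (Fin p) → ℝ)
    (y x : EuclideanSpace ℝ (Fin p)) : Prop :=
  ∀ u : EuclideanSpace ℝ (Fin p),
    φ x + (1 / (2 * γ)) * ‖x - y‖ ^ 2 ≤ φ u + (1 / (2 * γ)) * ‖u - y‖ ^ 2

def IsSplitStep {p : ℕ} (γ : ℝ) (g h f : EuclideanSpace ℝ (Fin p) → ℝ)
    (y x z : EuclideanSpace ℝ (Fin p)) : Prop :=
  IsProxPt γ g y x ∧ IsProxPt γ h ((2 : ℝ) • x - y - γ • gradient f x) z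

def LSmooth {p : ℕ} (L : ℝ) (f : EuclideanSpace ℝ (Fin p) → ℝ) : Prop :=
  Differentiable ℝ f ∧ ∀ a b : EuclideanSpace ℝ (Fin p),
    ‖gradient f a - gradient f b‖ ≤ L * ‖a - b‖

def IsSubgradient {p : ℕ} (φ : EuclideanSpace ℝ (Fin p) → ℝ)
    (x u : EuclideanSpace ℝ (Fin p)) : Prop :=
  ∀ w : EuclideanSpace ℝ (Fin p), φ w ≥ φ x + ⟪u, w - x⟫

open Set Filter Topology

section InnerProductSpace

variable {E : Type*} [NormedAddCommGroup E] [InnerProductSpace ℝ E]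

section Smooth

variable [CompleteSpace E] {f : E → ℝ}

theorem hasDerivAt_comp_lineMap {a b : E} {t : ℝ}
    (hf : DifferentiableAt ℝ f (AffineMap.lineMap a b t)) :
    HasDerivAt (fun s : ℝ => f (AffineMap.lineMap a b s))
      ⟪gradient f (AffineMap.lineMap a b t), b - a⟫ t := by
  have h := hf.hasGradientAt.hasFDerivAt.comp_hasDerivAt t
    (AffineMap.hasDerivAt_lineMap (a := a) (b := b))
  rwa [InnerProductSpace.toDual_apply_apply] at h

theorem ConvexOn.add_inner_gradient_le (hconv : ConvexOn ℝ univ f) {a : E}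
    (hf : DifferentiableAt ℝ f a) (b : E) : f a + ⟪gradient f a, b - a⟫ ≤ f b := by
  have hline : ConvexOn ℝ univ (fun s : ℝ => f (AffineMap.lineMap a b s)) :=
    hconv.comp_affineMap (AffineMap.lineMap a b)
  have hslope := hline.le_slope_of_hasDerivAt (mem_univ 0) (mem_univ 1) one_pos
    (hasDerivAt_comp_lineMap (by rwa [AffineMap.lineMap_apply_zero]))
  simp only [slope_def_field, AffineMap.lineMap_apply_zero, AffineMap.lineMap_apply_one,
    sub_zero, div_one] at hslope
  linarith

theorem le_add_inner_gradient_add_sq {L : ℝ} (hf : Differentiable ℝ f)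
    (hlip : ∀ a b, ‖gradient f a - gradient f b‖ ≤ L * ‖a - b‖) (a b : E) :
    f b ≤ f a + ⟪gradient f a, b - a⟫ + L / 2 * ‖b - a‖ ^ 2 := by
  set φ : ℝ → ℝ := fun t =>
    f (AffineMap.lineMap a b t) - t * ⟪gradient f a, b - a⟫ - L / 2 * t ^ 2 * ‖b - a‖ ^ 2
  have hφ : ∀ t, HasDerivAt φ
      (⟪gradient f (AffineMap.lineMap a b t) - gradient f a, b - a⟫ - L * t * ‖b - a‖ ^ 2) t := by
    intro t
    have h := ((hasDerivAt_comp_lineMap (a := a) (b := b) (hf _)).sub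
      ((hasDerivAt_id t).mul_const ⟪gradient f a, b - a⟫)).sub
      (((hasDerivAt_pow 2 t).const_mul (L / 2)).mul_const (‖b - a‖ ^ 2))
    refine h.congr_deriv ?_
    simp only [inner_sub_left, one_mul]
    push_cast
    ring
  have hanti : AntitoneOn φ (Ici 0) := by
    refine antitoneOn_of_hasDerivWithinAt_nonpos (convex_Ici 0)
      (fun t _ => (hφ t).continuousAt.continuousWithinAt)
      (fun t _ => (hφ t).hasDerivWithinAt) fun t ht => ?_
    rw [interior_Ici] at ht
    have hdist : ‖AffineMap.lineMap a b t - a‖ = t * ‖b - a‖ := by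
      rw [← dist_eq_norm, dist_lineMap_left, Real.norm_of_nonneg ht.le, dist_eq_norm']
    calc ⟪gradient f (AffineMap.lineMap a b t) - gradient f a, b - a⟫ - L * t * ‖b - a‖ ^ 2
        ≤ L * (t * ‖b - a‖) * ‖b - a‖ - L * t * ‖b - a‖ ^ 2 := by
          gcongr
          exact (real_inner_le_norm _ _).trans
            (mul_le_mul_of_nonneg_right (hdist ▸ hlip _ _) (norm_nonneg _))
      _ = 0 := by ring
  have h01 := hanti (mem_Ici.2 le_rfl) (mem_Ici.2 zero_le_one) zero_le_one
  simp only [φ, AffineMap.lineMap_apply_zero, AffineMap.lineMap_apply_one] at h01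
  linarith

theorem ConvexOn.add_inner_gradient_add_sq_le {L : ℝ} (hconv : ConvexOn ℝ univ f) (hL : 0 < L)
    (hf : Differentiable ℝ f) (hlip : ∀ a b, ‖gradient f a - gradient f b‖ ≤ L * ‖a - b‖)
    (a b : E) :
    f b + ⟪gradient f b, a - b⟫ + 1 / (2 * L) * ‖gradient f a - gradient f b‖ ^ 2 ≤ f a := by
  set d := gradient f a - gradient f b
  set w := a - L⁻¹ • d
  have hlower := hconv.add_inner_gradient_le (hf b) w
  have hupper := le_add_inner_gradient_add_sq hf hlip a w
  have hwb : ⟪gradient f b, w - b⟫ = ⟪gradient f b, a - b⟫ - L⁻¹ * ⟪gradient f b, d⟫ := by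
    rw [show w - b = (a - b) - L⁻¹ • d by simp only [w]; abel, inner_sub_right,
      real_inner_smul_right]
  have hwa : ⟪gradient f a, w - a⟫ = -(L⁻¹ * ⟪gradient f a, d⟫) := by
    rw [show w - a = -(L⁻¹ • d) by simp only [w]; abel, inner_neg_right, real_inner_smul_right]
  have hnorm : ‖w - a‖ ^ 2 = L⁻¹ ^ 2 * ‖d‖ ^ 2 := by
    rw [show w - a = -(L⁻¹ • d) by simp only [w]; abel, norm_neg, norm_smul, mul_pow,
      Real.norm_of_nonneg (inv_nonneg.2 hL.le)]
  have hd : L⁻¹ * ⟪gradient f a, d⟫ - L⁻¹ * ⟪gradient f b, d⟫ = L⁻¹ * ‖d‖ ^ 2 := by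
    rw [← mul_sub, ← inner_sub_left, real_inner_self_eq_norm_sq]
  rw [hwb] at hlower
  rw [hwa, hnorm] at hupper
  have hL₁ : L / 2 * (L⁻¹ ^ 2 * ‖d‖ ^ 2) = 1 / (2 * L) * ‖d‖ ^ 2 := by field_simp
  have hL₂ : L⁻¹ * ‖d‖ ^ 2 = 2 * (1 / (2 * L) * ‖d‖ ^ 2) := by field_simp
  linarith

theorem ConvexOn.cocoercive_gradient {L : ℝ} (hconv : ConvexOn ℝ univ f) (hL : 0 < L)
    (hf : Differentiable ℝ f) (hlip : ∀ a b, ‖gradient f a - gradient f b‖ ≤ L * ‖a - b‖)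
    (a b : E) :
    1 / L * ‖gradient f a - gradient f b‖ ^ 2 ≤ ⟪gradient f a - gradient f b, a - b⟫ := by
  have hab := hconv.add_inner_gradient_add_sq_le hL hf hlip a b
  have hba := hconv.add_inner_gradient_add_sq_le hL hf hlip b a
  rw [norm_sub_rev, ← neg_sub a b, inner_neg_right] at hba
  rw [inner_sub_left]
  have : 1 / L * ‖gradient f a - gradient f b‖ ^ 2
      = 2 * (1 / (2 * L) * ‖gradient f a - gradient f b‖ ^ 2) := by field_simp
  linarith

end Smooth

-- `D, X, Z, W` stand for `y - y*`, `x - x*`, `z - x*`, `∇f(x) - ∇f(x*)` in a splitting step.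
theorem norm_sub_sub_sq_le_of_inner_nonneg {D X Z W : E} {γ L : ℝ} (hγ : 0 ≤ γ) (hL : 0 < L)
    (hX : 0 ≤ ⟪D - X, X⟫) (hZ : 0 ≤ ⟪(2 : ℝ) • X - D - γ • W - Z, Z⟫)
    (hW : 1 / L * ‖W‖ ^ 2 ≤ ⟪W, X⟫) :
    ‖D - (X - Z)‖ ^ 2 ≤ ‖D‖ ^ 2 - (1 - γ * L / 2) * ‖X - Z‖ ^ 2 := by
  have hsum : ⟪D - X, X⟫ + ⟪(2 : ℝ) • X - D - γ • W - Z, Z⟫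
      = ⟪D - (X - Z), X - Z⟫ - γ * ⟪W, Z⟫ := by
    simp only [inner_sub_left, inner_sub_right, real_inner_smul_left, real_inner_comm X Z]
    ring
  have hWZ : -(L / 4 * ‖X - Z‖ ^ 2) ≤ ⟪W, Z⟫ := by
    have hsq : 0 ≤ 1 / L * ‖W - (L / 2) • (X - Z)‖ ^ 2 := by positivity
    rw [norm_sub_sq_real, real_inner_smul_right, norm_smul, Real.norm_of_nonneg (by positivity),
      inner_sub_right] at hsq
    have h₁ : 1 / L * (2 * (L / 2 * (⟪W, X⟫ - ⟪W, Z⟫))) = ⟪W, X⟫ - ⟪W, Z⟫ := by field_simp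
    have h₂ : 1 / L * (L / 2 * ‖X - Z‖) ^ 2 = L / 4 * ‖X - Z‖ ^ 2 := by field_simp; ring
    linarith
  have hnorm : ‖D‖ ^ 2 = ‖D - (X - Z)‖ ^ 2 + 2 * ⟪D - (X - Z), X - Z⟫ + ‖X - Z‖ ^ 2 := by
    rw [← norm_add_sq_real, sub_add_cancel]
  linarith [mul_le_mul_of_nonneg_left hWZ hγ]

end InnerProductSpace

theorem le_of_forall_mem_Ioc_le_add_mul {a b c : ℝ} (h : ∀ t ∈ Ioc (0 : ℝ) 1, a ≤ b + t * c) :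
    a ≤ b := by
  have hlim : Tendsto (fun t => b + t * c) (𝓝[>] 0) (𝓝 b) := by
    have hcont : Continuous fun t : ℝ => b + t * c := by fun_prop
    simpa using (hcont.tendsto 0).mono_left nhdsWithin_le_nhds
  exact ge_of_tendsto hlim (eventually_of_mem (Ioc_mem_nhdsGT one_pos) h)

section Prox

variable {p : ℕ} {γ : ℝ} {φ : EuclideanSpace ℝ (Fin p) → ℝ}

theorem IsProxPt.isSubgradient (hγ : 0 < γ) (hφ : ConvexOn ℝ univ φ)
    {y x : EuclideanSpace ℝ (Fin p)} (hx : IsProxPt γ φ y x) :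
    IsSubgradient φ x (γ⁻¹ • (y - x)) := by
  intro u
  rw [ge_iff_le, ← sub_nonneg]
  refine le_of_forall_mem_Ioc_le_add_mul (c := 1 / (2 * γ) * ‖u - x‖ ^ 2) fun t ht => ?_
  have hprox := hx (AffineMap.lineMap x u t)
  have hconv := hφ.2 (mem_univ x) (mem_univ u) (sub_nonneg.2 ht.2) ht.1.le (sub_add_cancel 1 t)
  rw [← AffineMap.lineMap_apply_module, smul_eq_mul, smul_eq_mul] at hconv
  have hnorm : ‖AffineMap.lineMap x u t - y‖ ^ 2
      = ‖x - y‖ ^ 2 + 2 * t * ⟪x - y, u - x⟫ + t ^ 2 * ‖u - x‖ ^ 2 := by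
    rw [AffineMap.lineMap_apply_module', show t • (u - x) + x - y = (x - y) + t • (u - x) by abel,
      norm_add_sq_real, real_inner_smul_right, norm_smul, Real.norm_of_nonneg ht.1.le]
    ring
  have hinner : ⟪γ⁻¹ • (y - x), u - x⟫ = -(2 * (1 / (2 * γ)) * ⟪x - y, u - x⟫) := by
    rw [real_inner_smul_left, ← neg_sub x y, inner_neg_left]
    field_simp
  rw [hnorm] at hprox
  rw [hinner]
  refine nonneg_of_mul_nonneg_right ?_ ht.1
  linear_combination hprox + hconv

theorem IsSubgradient.inner_sub_nonneg {x x' u u' : EuclideanSpace ℝ (Fin p)}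
    (hu : IsSubgradient φ x u) (hu' : IsSubgradient φ x' u') : 0 ≤ ⟪u - u', x - x'⟫ := by
  have h := hu x'
  have h' := hu' x
  rw [← neg_sub x x', inner_neg_right] at h
  rw [inner_sub_left]
  linarith

theorem IsProxPt.inner_sub_sub_nonneg (hγ : 0 < γ) (hφ : ConvexOn ℝ univ φ)
    {y x y' x' : EuclideanSpace ℝ (Fin p)} (hx : IsProxPt γ φ y x) (hx' : IsProxPt γ φ y' x') :
    0 ≤ ⟪(y - x) - (y' - x'), x - x'⟫ := by
  have h := (hx.isSubgradient hγ hφ).inner_sub_nonneg (hx'.isSubgradient hγ hφ)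
  rw [← smul_sub, real_inner_smul_left] at h
  exact nonneg_of_mul_nonneg_right h (inv_pos.2 hγ)

end Prox

theorem IsSplitStep.norm_sub_sq_le {p : ℕ} {L γ : ℝ} {g h f : EuclideanSpace ℝ (Fin p) → ℝ}
    {ystar xstar y x z : EuclideanSpace ℝ (Fin p)} (hstep : IsSplitStep γ g h f y x z)
    (hL : 0 < L) (hγ : 0 < γ) (hg : ConvexOn ℝ univ g) (hh : ConvexOn ℝ univ h)
    (hf : ConvexOn ℝ univ f) (hfL : LSmooth L f) (hfix₁ : IsProxPt γ g ystar xstar)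
    (hfix₂ : IsProxPt γ h ((2 : ℝ) • xstar - ystar - γ • gradient f xstar) xstar) :
    ‖(y - x + z) - ystar‖ ^ 2 ≤ ‖y - ystar‖ ^ 2 - γ ^ 2 * (1 - γ * L / 2) * ‖γ⁻¹ • (x - z)‖ ^ 2 := by
  have hX := hstep.1.inner_sub_sub_nonneg hγ hg hfix₁
  have hZ := hstep.2.inner_sub_sub_nonneg hγ hh hfix₂
  have hW := hf.cocoercive_gradient hL hfL.1 hfL.2 x xstar
  have key := norm_sub_sub_sq_le_of_inner_nonneg (D := y - ystar) hγ.le hL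
    (by convert hX using 2; abel) (by convert hZ using 2; simp only [smul_sub]; abel) hW
  have hscale : γ ^ 2 * ‖γ⁻¹ • (x - z)‖ ^ 2 = ‖x - z‖ ^ 2 := by
    rw [norm_smul, mul_pow, norm_inv, Real.norm_of_nonneg hγ.le]
    field_simp
  rw [show y - ystar - (x - xstar - (z - xstar)) = y - x + z - ystar by abel,
    show x - xstar - (z - xstar) = x - z by abel] at key
  linear_combination key + (1 - γ * L / 2) * hscale

theorem stmt_12_general (p : ℕ) (L : ℝ) (hL : 0 < L) (γ : ℝ) (hγ : 0 < γ)
    (g h f : EuclideanSpace ℝ (Fin p) → ℝ)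
    (hg : ConvexOn ℝ Set.univ g) (hh : ConvexOn ℝ Set.univ h)
    (hf : ConvexOn ℝ Set.univ f) (hfL : LSmooth L f)
    (ystar xstar : EuclideanSpace ℝ (Fin p))
    (hfix₁ : IsProxPt γ g ystar xstar)
    (hfix₂ : IsProxPt γ h ((2 : ℝ) • xstar - ystar - γ • gradient f xstar) xstar)
    (y x z : ℕ → EuclideanSpace ℝ (Fin p))
    (hstep : ∀ k, IsSplitStep γ g h f (y k) (x k) (z k))
    (hupdate : ∀ k, y (k + 1) = y k - x k + z k) :
    ∀ k : ℕ,
      γ ^ 2 * (1 - γ * L / 2) *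
          ∑ i ∈ Finset.range (k + 1), ‖γ⁻¹ • (x i - z i)‖ ^ 2 ≤
        ‖y 0 - ystar‖ ^ 2 := by
  intro k
  have hstep_le : ∀ i, γ ^ 2 * (1 - γ * L / 2) * ‖γ⁻¹ • (x i - z i)‖ ^ 2
      ≤ ‖y i - ystar‖ ^ 2 - ‖y (i + 1) - ystar‖ ^ 2 := fun i => by
    have := (hstep i).norm_sub_sq_le hL hγ hg hh hf hfL hfix₁ hfix₂
    rw [← hupdate i] at this
    linarith
  calc γ ^ 2 * (1 - γ * L / 2) * ∑ i ∈ Finset.range (k + 1), ‖γ⁻¹ • (x i - z i)‖ ^ 2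
      ≤ ∑ i ∈ Finset.range (k + 1), (‖y i - ystar‖ ^ 2 - ‖y (i + 1) - ystar‖ ^ 2) := by
        rw [Finset.mul_sum]
        exact Finset.sum_le_sum fun i _ => hstep_le i
    _ = ‖y 0 - ystar‖ ^ 2 - ‖y (k + 1) - ystar‖ ^ 2 :=
        Finset.sum_range_sub' (fun i => ‖y i - ystar‖ ^ 2) (k + 1)
    _ ≤ ‖y 0 - ystar‖ ^ 2 := sub_le_self _ (sq_nonneg _)

/-- summed bound on the gradient mapping norms. -/
theorem stmt_12 (p : ℕ) (hp : 0 < p) (L : ℝ) (hL : 0 < L) (γ : ℝ) (hγ : 0 < γ)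
    (g h f : EuclideanSpace ℝ (Fin p) → ℝ)
    (hg : ConvexOn ℝ Set.univ g) (hh : ConvexOn ℝ Set.univ h)
    (hf : ConvexOn ℝ Set.univ f) (hfL : LSmooth L f)
    (ystar xstar : EuclideanSpace ℝ (Fin p))
    (hfix₁ : IsProxPt γ g ystar xstar)
    (hfix₂ : IsProxPt γ h ((2 : ℝ) • xstar - ystar - γ • gradient f xstar) xstar)
    (y x z : ℕ → EuclideanSpace ℝ (Fin p))
    (hstep : ∀ k, IsSplitStep γ g h f (y k) (x k) (z k))
    (hupdate : ∀ k, y (k + 1) = y k - x k + z k) :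
    ∀ k : ℕ,
      γ ^ 2 * (1 - γ * L / 2) *
          ∑ i ∈ Finset.range (k + 1), ‖γ⁻¹ • (x i - z i)‖ ^ 2 ≤
        ‖y 0 - ystar‖ ^ 2 :=
  stmt_12_general p L hL γ hγ g h f hg hh hf hfL ystar xstar hfix₁ hfix₂ y x z hstep hupdate
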